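/- Let G be a marked graph with adjacent vertices v ≠ w. Let N_v be the neighbors of v not adjacent to w, N_w the neighbors of w not adjacent to v, and N_vw the common neighbors of v and w (so v ∈ N_w and w ∈ N_v). Then ((G_cru^v)_cru^w)_cru^v is obtained from G by exactly: (a) changing the mark of v by the pattern c↔unmarked, r↔cr, u↔ur; (b) changing the mark of w by the same pattern; (c) making the neighbors of v equal to (N_w − v) ∪ {w} ∪ N_vw and the neighbors of w equal to (N_v − w) ∪ {v} ∪ N_vw; (d) toggling every adjacency between two vertices lying in different elements of {N_v − w, N_w − v, N_vw}. -/

import Mathlib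

/-- The six vertex marks of a multiply marked graph. -/
inductive Mark : Type
  | un | r | c | cr | u | ur
deriving DecidableEq

/-- A (multiply marked) graph: symmetric irreflexive adjacency, loops,
marks, and a number of free loops. -/
structure MGraph (V : Type) [DecidableEq V] : Type where
  adj : V → V → Bool
  adj_symm : ∀ x y, adj x y = adj y x
  adj_irrefl : ∀ x, adj x x = false
  loop : V → Bool
  mark : V → Mark
  freeLoops : ℕ

namespace MGraph

variable {V : Type} [DecidableEq V]

/-- The mark change at `v` itself: unmarked↔u, r↔ur, c↔cr. -/
def flipV : Mark → Mark
  | .un => .u | .u => .un | .r => .ur | .ur => .r | .c => .cr | .cr => .c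

/-- The mark change at neighbors of `v`: unmarked↔r, c↔ur, u↔cr. -/
def flipN : Mark → Mark
  | .un => .r | .r => .un | .c => .ur | .ur => .c | .u => .cr | .cr => .u

/-- The marked local complement `G_cru^v`. -/
def mlc (G : MGraph V) (v : V) : MGraph V where
  adj x y := if x ≠ y ∧ G.adj v x = true ∧ G.adj v y = true then !(G.adj x y) else G.adj x y
  adj_symm := by
    intro x y
    try dsimp only
    by_cases h : x ≠ y ∧ G.adj v x = true ∧ G.adj v y = true
    · rw [if_pos h, if_pos ⟨h.1.symm, h.2.2, h.2.1⟩, G.adj_symm]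
    · rw [if_neg h, if_neg (fun h' => h ⟨h'.1.symm, h'.2.2, h'.2.1⟩), G.adj_symm]
  adj_irrefl := by
    intro x
    try dsimp only
    rw [if_neg (fun h => h.1 rfl), G.adj_irrefl]
  loop := G.loop
  mark x := if x = v then flipV (G.mark x)
            else if G.adj v x = true then flipN (G.mark x) else G.mark x
  freeLoops := G.freeLoops

end MGraph

namespace MGraph

variable {V : Type} [DecidableEq V]

/-- Membership in `N_v − w`: neighbors of `v` that are not neighbors of `w`,
other than `w` itself. -/
def inNv (G : MGraph V) (v w x : V) : Prop :=
  G.adj v x = true ∧ G.adj w x = false ∧ x ≠ w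

/-- Membership in `N_w − v`: neighbors of `w` that are not neighbors of `v`,
other than `v` itself. -/
def inNw (G : MGraph V) (v w x : V) : Prop :=
  G.adj w x = true ∧ G.adj v x = false ∧ x ≠ v

/-- Membership in `N_vw`: common neighbors of `v` and `w`. -/
def inNvw (G : MGraph V) (v w x : V) : Prop :=
  G.adj v x = true ∧ G.adj w x = true

/-- `x` and `y` lie in different elements of `{N_v − w, N_w − v, N_vw}`. -/
def diffClass (G : MGraph V) (v w x y : V) : Prop :=
  (G.inNv v w x ∧ (G.inNw v w y ∨ G.inNvw v w y)) ∨
  (G.inNw v w x ∧ (G.inNv v w y ∨ G.inNvw v w y)) ∨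
  (G.inNvw v w x ∧ (G.inNv v w y ∨ G.inNw v w y))

end MGraph

/-- The mark change at the pivot vertices: c↔unmarked, r↔cr, u↔ur. -/
def pivotMark : Mark → Mark
  | .c => .un | .un => .c | .r => .cr | .cr => .r | .u => .ur | .ur => .u

/-
Work over 𝔽₂ with `a = G.adj v` and `b = G.adj w`. A local complement adds to the adjacency
of distinct vertices the rank-one form `n ⊗ n` of the current neighbourhood `n` of the pivot
vertex. Along `v, w, v` these neighbourhoods are `a`, `a + b` and `b` away from `{v, w}`, and
`a ⊗ a + (a + b) ⊗ (a + b) + b ⊗ b = a ⊗ b + b ⊗ a`, which is `1` exactly on pairs lying in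
different classes among `N_v − w`, `N_w − v`, `N_vw`. Similarly a vertex outside `{v, w}` has
its mark flipped by the involution `flipN` an even number `a + (a + b) + b` of times, while
the marks of `v` and `w` undergo `flipV ∘ flipN ∘ flipV` and `flipN ∘ flipV ∘ flipN`, both
equal to `pivotMark`.
-/

namespace MGraph

variable {V : Type} [DecidableEq V] (G : MGraph V)

lemma ne_of_adj {x y : V} (h : G.adj x y = true) : x ≠ y := by
  rintro rfl
  simp [G.adj_irrefl] at h

lemma flipN_flipN (m : Mark) : flipN (flipN m) = m := by
  cases m <;> rfl

lemma flipV_flipN_flipV (m : Mark) : flipV (flipN (flipV m)) = pivotMark m := by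
  cases m <;> rfl

lemma flipN_flipV_flipN (m : Mark) : flipN (flipV (flipN m)) = pivotMark m := by
  cases m <;> rfl

lemma mlc_mark_self (v : V) : (G.mlc v).mark v = flipV (G.mark v) :=
  if_pos rfl

lemma mlc_mark_of_ne {v z : V} (hz : z ≠ v) :
    (G.mlc v).mark z = bif G.adj v z then flipN (G.mark z) else G.mark z := by
  simp only [mlc, if_neg hz]
  cases G.adj v z <;> rfl

lemma mlc_adj_self_left (v y : V) : (G.mlc v).adj v y = G.adj v y := by
  simp [mlc, G.adj_irrefl]

lemma mlc_adj_self_right (v x : V) : (G.mlc v).adj x v = G.adj x v := by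
  rw [adj_symm, mlc_adj_self_left, adj_symm]

lemma mlc_adj_of_ne (v : V) {x y : V} (hxy : x ≠ y) :
    (G.mlc v).adj x y = (G.adj x y ^^ (G.adj v x && G.adj v y)) := by
  simp only [mlc]
  cases G.adj v x <;> cases G.adj v y <;> simp [hxy]

lemma mlc_adj_of_adj {v w y : V} (hadj : G.adj v w = true) (hyw : y ≠ w) :
    (G.mlc v).adj w y = (G.adj w y ^^ G.adj v y) := by
  rw [G.mlc_adj_of_ne v hyw.symm, hadj, Bool.true_and]

lemma mlc_mlc_adj_left_right {v w : V} (hadj : G.adj v w = true) :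
    ((G.mlc v).mlc w).adj v w = true := by
  rw [mlc_adj_self_right, mlc_adj_self_left, hadj]

lemma mlc_mlc_adj_left_of_ne {v w x : V} (hadj : G.adj v w = true) (hxv : x ≠ v)
    (hxw : x ≠ w) : ((G.mlc v).mlc w).adj v x = G.adj w x := by
  have hwv : (G.mlc v).adj w v = true := by rw [mlc_adj_self_right, adj_symm, hadj]
  rw [mlc_adj_of_adj _ hwv hxv, mlc_adj_self_left, G.mlc_adj_of_adj hadj hxw]
  cases G.adj v x <;> cases G.adj w x <;> rfl

def pivot (v w : V) : MGraph V := ((G.mlc v).mlc w).mlc v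

variable {G} {v w : V}

lemma pivot_mark_left (hadj : G.adj v w = true) :
    (G.pivot v w).mark v = pivotMark (G.mark v) := by
  have hwv : (G.mlc v).adj w v = true := by rw [mlc_adj_self_right, adj_symm, hadj]
  rw [pivot, mlc_mark_self, mlc_mark_of_ne _ (G.ne_of_adj hadj), hwv, cond_true,
    mlc_mark_self, flipV_flipN_flipV]

lemma pivot_mark_right (hadj : G.adj v w = true) :
    (G.pivot v w).mark w = pivotMark (G.mark w) := by
  rw [pivot, mlc_mark_of_ne _ (G.ne_of_adj hadj).symm, G.mlc_mlc_adj_left_right hadj, cond_true,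
    mlc_mark_self, mlc_mark_of_ne _ (G.ne_of_adj hadj).symm, hadj, cond_true, flipN_flipV_flipN]

lemma pivot_mark_of_ne (hadj : G.adj v w = true) {z : V} (hzv : z ≠ v) (hzw : z ≠ w) :
    (G.pivot v w).mark z = G.mark z := by
  rw [pivot, mlc_mark_of_ne _ hzv, G.mlc_mlc_adj_left_of_ne hadj hzv hzw, mlc_mark_of_ne _ hzw,
    mlc_adj_of_adj _ hadj hzw, mlc_mark_of_ne _ hzv]
  cases G.adj v z <;> cases G.adj w z <;> simp [flipN_flipN]

lemma pivot_adj_left_of_ne (hadj : G.adj v w = true) {x : V} (hxv : x ≠ v) (hxw : x ≠ w) :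
    (G.pivot v w).adj v x = G.adj w x := by
  rw [pivot, mlc_adj_self_left, G.mlc_mlc_adj_left_of_ne hadj hxv hxw]

lemma pivot_adj_right_of_ne (hadj : G.adj v w = true) {x : V} (hxv : x ≠ v) (hxw : x ≠ w) :
    (G.pivot v w).adj w x = G.adj v x := by
  rw [pivot, mlc_adj_of_adj _ (G.mlc_mlc_adj_left_right hadj) hxw, mlc_adj_self_left,
    G.mlc_adj_of_adj hadj hxw, G.mlc_mlc_adj_left_of_ne hadj hxv hxw]
  cases G.adj v x <;> cases G.adj w x <;> rfl

lemma pivot_adj_left_right (hadj : G.adj v w = true) : (G.pivot v w).adj v w = true := by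
  rw [pivot, mlc_adj_self_left, G.mlc_mlc_adj_left_right hadj]

lemma pivot_adj_of_ne (hadj : G.adj v w = true) {x y : V} (hxv : x ≠ v) (hxw : x ≠ w)
    (hyv : y ≠ v) (hyw : y ≠ w) :
    (G.pivot v w).adj x y =
      (G.adj x y ^^ ((G.adj v x && G.adj w y) ^^ (G.adj w x && G.adj v y))) := by
  rcases eq_or_ne x y with rfl | hxy
  · rw [adj_irrefl, adj_irrefl, Bool.and_comm, Bool.xor_self, Bool.xor_false]
  rw [pivot, mlc_adj_of_ne _ _ hxy, mlc_adj_of_ne _ _ hxy, mlc_adj_of_ne _ _ hxy,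
    G.mlc_mlc_adj_left_of_ne hadj hxv hxw, G.mlc_mlc_adj_left_of_ne hadj hyv hyw,
    G.mlc_adj_of_adj hadj hxw, G.mlc_adj_of_adj hadj hyw]
  cases G.adj v x <;> cases G.adj w x <;> cases G.adj v y <;> cases G.adj w y <;> simp

lemma pivot_adj_left_iff (hadj : G.adj v w = true) (x : V) :
    (G.pivot v w).adj v x = true ↔ G.inNw v w x ∨ x = w ∨ G.inNvw v w x := by
  rcases eq_or_ne x v with rfl | hxv
  · simp [inNw, inNvw, adj_irrefl, G.ne_of_adj hadj]
  rcases eq_or_ne x w with rfl | hxw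
  · simp [pivot_adj_left_right hadj]
  rw [pivot_adj_left_of_ne hadj hxv hxw, inNw, inNvw]
  cases G.adj v x <;> simp [hxv, hxw]

lemma pivot_adj_right_iff (hadj : G.adj v w = true) (x : V) :
    (G.pivot v w).adj w x = true ↔ G.inNv v w x ∨ x = v ∨ G.inNvw v w x := by
  rcases eq_or_ne x w with rfl | hxw
  · simp [inNv, inNvw, adj_irrefl, (G.ne_of_adj hadj).symm]
  rcases eq_or_ne x v with rfl | hxv
  · simp [adj_symm _ w, pivot_adj_left_right hadj]
  rw [pivot_adj_right_of_ne hadj hxv hxw, inNv, inNvw]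
  cases G.adj w x <;> simp [hxv, hxw]

lemma diffClass_iff {x y : V} : G.diffClass v w x y ↔ (x ≠ v ∧ x ≠ w ∧ y ≠ v ∧ y ≠ w) ∧
    ((G.adj v x && G.adj w y) ^^ (G.adj w x && G.adj v y)) = true := by
  have hv {z : V} (h : G.adj v z = true) : z ≠ v := (G.ne_of_adj h).symm
  have hw {z : V} (h : G.adj w z = true) : z ≠ w := (G.ne_of_adj h).symm
  unfold diffClass inNv inNw inNvw
  constructor
  · rintro (⟨⟨hvx, hwx, hxw⟩, ⟨hwy, hvy, hyv⟩ | ⟨hvy, hwy⟩⟩ | ⟨⟨hwx, hvx, hxv⟩, ⟨hvy, hwy, hyw⟩ |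
      ⟨hvy, hwy⟩⟩ | ⟨⟨hvx, hwx⟩, ⟨hvy, hwy, hyw⟩ | ⟨hwy, hvy, hyv⟩⟩) <;>
    refine ⟨⟨?_, ?_, ?_, ?_⟩, ?_⟩ <;>
    first | assumption | exact hv ‹_› | exact hw ‹_› | simp [*]
  · rintro ⟨⟨hxv, hxw, hyv, hyw⟩, h⟩
    revert h
    cases G.adj v x <;> cases G.adj w x <;> cases G.adj v y <;> cases G.adj w y <;>
      simp [hxv, hxw, hyv, hyw]

lemma pivot_adj_of_diffClass (hadj : G.adj v w = true) {x y : V} (hd : G.diffClass v w x y) :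
    (G.pivot v w).adj x y = !G.adj x y := by
  obtain ⟨⟨hxv, hxw, hyv, hyw⟩, htoggle⟩ := diffClass_iff.mp hd
  rw [pivot_adj_of_ne hadj hxv hxw hyv hyw, htoggle, Bool.xor_true]

lemma pivot_adj_of_not_diffClass (hadj : G.adj v w = true) {x y : V} (hxv : x ≠ v)
    (hxw : x ≠ w) (hyv : y ≠ v) (hyw : y ≠ w) (hd : ¬G.diffClass v w x y) :
    (G.pivot v w).adj x y = G.adj x y := by
  have htoggle : ((G.adj v x && G.adj w y) ^^ (G.adj w x && G.adj v y)) = false := by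
    simpa [diffClass_iff, hxv, hxw, hyv, hyw] using hd
  rw [pivot_adj_of_ne hadj hxv hxw hyv hyw, htoggle, Bool.xor_false]

end MGraph

theorem marked_pivot_description_general {V : Type} [DecidableEq V] (G : MGraph V)
    (v w : V) (hadj : G.adj v w = true) :
    -- (a) the mark of v changes by c↔unmarked, r↔cr, u↔ur
    (((G.mlc v).mlc w).mlc v).mark v = pivotMark (G.mark v) ∧
    -- (b) the mark of w changes by the same pattern
    (((G.mlc v).mlc w).mlc v).mark w = pivotMark (G.mark w) ∧
    -- (c) the neighbors of v become (N_w − v) ∪ {w} ∪ N_vw ...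
    (∀ x, (((G.mlc v).mlc w).mlc v).adj v x = true ↔
      (G.inNw v w x ∨ x = w ∨ G.inNvw v w x)) ∧
    -- ... and the neighbors of w become (N_v − w) ∪ {v} ∪ N_vw
    (∀ x, (((G.mlc v).mlc w).mlc v).adj w x = true ↔
      (G.inNv v w x ∨ x = v ∨ G.inNvw v w x)) ∧
    -- (d) adjacencies between vertices in different elements of
    -- {N_v − w, N_w − v, N_vw} are toggled
    (∀ x y, G.diffClass v w x y →
      (((G.mlc v).mlc w).mlc v).adj x y = !(G.adj x y)) ∧
    -- and no other changes: marks of other vertices are unchanged,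
    (∀ x, x ≠ v → x ≠ w → (((G.mlc v).mlc w).mlc v).mark x = G.mark x) ∧
    -- loops are unchanged,
    (∀ x, (((G.mlc v).mlc w).mlc v).loop x = G.loop x) ∧
    -- and all other adjacencies are unchanged
    (∀ x y, x ≠ v → x ≠ w → y ≠ v → y ≠ w → ¬ G.diffClass v w x y →
      (((G.mlc v).mlc w).mlc v).adj x y = G.adj x y) :=
  ⟨MGraph.pivot_mark_left hadj, MGraph.pivot_mark_right hadj, MGraph.pivot_adj_left_iff hadj,
    MGraph.pivot_adj_right_iff hadj, fun _ _ => MGraph.pivot_adj_of_diffClass hadj,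
    fun _ => MGraph.pivot_mark_of_ne hadj, fun _ => rfl,
    fun _ _ => MGraph.pivot_adj_of_not_diffClass hadj⟩

/-- the marked pivot `((G_cru^v)_cru^w)_cru^v` is obtained from
`G` by exactly the changes (a)–(d), and no others. -/
theorem marked_pivot_description {V : Type} [DecidableEq V] (G : MGraph V)
    (v w : V) (hvw : v ≠ w) (hadj : G.adj v w = true) :
    -- (a) the mark of v changes by c↔unmarked, r↔cr, u↔ur
    (((G.mlc v).mlc w).mlc v).mark v = pivotMark (G.mark v) ∧
    -- (b) the mark of w changes by the same pattern
    (((G.mlc v).mlc w).mlc v).mark w = pivotMark (G.mark w) ∧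
    -- (c) the neighbors of v become (N_w − v) ∪ {w} ∪ N_vw ...
    (∀ x, (((G.mlc v).mlc w).mlc v).adj v x = true ↔
      (G.inNw v w x ∨ x = w ∨ G.inNvw v w x)) ∧
    -- ... and the neighbors of w become (N_v − w) ∪ {v} ∪ N_vw
    (∀ x, (((G.mlc v).mlc w).mlc v).adj w x = true ↔
      (G.inNv v w x ∨ x = v ∨ G.inNvw v w x)) ∧
    -- (d) adjacencies between vertices in different elements of
    -- {N_v − w, N_w − v, N_vw} are toggled
    (∀ x y, G.diffClass v w x y →
      (((G.mlc v).mlc w).mlc v).adj x y = !(G.adj x y)) ∧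
    -- and no other changes: marks of other vertices are unchanged,
    (∀ x, x ≠ v → x ≠ w → (((G.mlc v).mlc w).mlc v).mark x = G.mark x) ∧
    -- loops are unchanged,
    (∀ x, (((G.mlc v).mlc w).mlc v).loop x = G.loop x) ∧
    -- and all other adjacencies are unchanged
    (∀ x y, x ≠ v → x ≠ w → y ≠ v → y ≠ w → ¬ G.diffClass v w x y →
      (((G.mlc v).mlc w).mlc v).adj x y = G.adj x y) :=
  marked_pivot_description_general G v w hadj
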